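/- Let 1 → A → G̃ → Γ → 1 be a central extension of groups with A ≅ Z/n for n ≥ 1. If G̃ is residually finite, then there is a finite-index subgroup Υ of Γ such that the restriction of the extension to Υ splits, i.e., the preimage of Υ in G̃ contains a subgroup mapping isomorphically onto Υ. -/

import Mathlib

/-!
The kernel `ℤ/n` is finite, so residual finiteness of `G̃` yields finitely many finite-index
subgroups, one avoiding each non-trivial kernel element; their intersection `K` has finite index
and meets the kernel trivially. Then `π` maps `K` isomorphically onto `π K`, which has finite
index in `Γ`.
-/

/-- A group is residually finite if every non-trivial element lies outside some
finite-index subgroup. -/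
def ResiduallyFinite (G : Type*) [Group G] : Prop :=
  ∀ g : G, g ≠ 1 → ∃ H : Subgroup G, H.FiniteIndex ∧ g ∉ H

theorem ResiduallyFinite.exists_finiteIndex_disjoint {G : Type*} [Group G]
    (hG : ResiduallyFinite G) (N : Subgroup G) [Finite N] :
    ∃ K : Subgroup G, K.FiniteIndex ∧ Disjoint K N := by
  have avoid : ∀ a : N, ∃ H : Subgroup G, H.FiniteIndex ∧ ((a : G) ≠ 1 → (a : G) ∉ H) := by
    intro a
    by_cases ha : (a : G) = 1
    · exact ⟨⊤, inferInstance, fun h => absurd ha h⟩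
    · obtain ⟨H, hH, haH⟩ := hG a ha
      exact ⟨H, hH, fun _ => haH⟩
  choose H hH haH using avoid
  refine ⟨⨅ a, H a, Subgroup.finiteIndex_iInf hH, Subgroup.disjoint_def.mpr ?_⟩
  intro g hgK hgN
  by_contra hg
  exact haH ⟨g, hgN⟩ hg (Subgroup.mem_iInf.mp hgK ⟨g, hgN⟩)

theorem MonoidHom.injective_domRestrict_of_disjoint_ker {G G' : Type*} [Group G] [Group G']
    (f : G →* G') {K : Subgroup G} (h : Disjoint K f.ker) :
    Function.Injective (f.domRestrict K) := by
  rw [← MonoidHom.ker_eq_bot_iff, MonoidHom.ker_domRestrict, Subgroup.subgroupOf_eq_bot]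
  exact h.symm

theorem Subgroup.finiteIndex_map_of_surjective {G G' : Type*} [Group G] [Group G']
    {f : G →* G'} (hf : Function.Surjective f) (H : Subgroup G) [H.FiniteIndex] :
    (H.map f).FiniteIndex :=
  ⟨ne_zero_of_dvd_ne_zero H.index_ne_zero_of_finite (H.index_map_dvd hf)⟩

theorem stmt2_general (Gt Γ : Type*) [Group Gt] [Group Γ] (n : ℕ) (hn : 1 ≤ n)
    (π : Gt →* Γ) (hsurj : Function.Surjective π)
    (iso : π.ker ≃* Multiplicative (ZMod n))
    (hRF : ResiduallyFinite Gt) :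
    ∃ Υ : Subgroup Γ, Υ.FiniteIndex ∧
      ∃ S : Subgroup Gt, S.map π = Υ ∧ Function.Injective (fun s : S => π (s : Gt)) := by
  have : NeZero n := ⟨by omega⟩
  have : Finite π.ker := Finite.of_equiv _ iso.symm.toEquiv
  obtain ⟨K, hK, hdisj⟩ := hRF.exists_finiteIndex_disjoint π.ker
  exact ⟨K.map π, Subgroup.finiteIndex_map_of_surjective hsurj K, K, rfl,
    π.injective_domRestrict_of_disjoint_ker hdisj⟩

/-- Let `1 → A → G̃ → Γ → 1` be a central extension of groups with `A ≅ ℤ/n`, `n ≥ 1`.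
If `G̃` is residually finite, then there is a finite-index subgroup `Υ` of `Γ` such that
the restriction of the extension to `Υ` splits: the preimage of `Υ` in `G̃` contains a
subgroup mapping isomorphically onto `Υ`. -/
theorem stmt2 (Gt Γ : Type*) [Group Gt] [Group Γ] (n : ℕ) (hn : 1 ≤ n)
    (π : Gt →* Γ) (hsurj : Function.Surjective π)
    (hcentral : π.ker ≤ Subgroup.center Gt)
    (iso : π.ker ≃* Multiplicative (ZMod n))
    (hRF : ResiduallyFinite Gt) :
    ∃ Υ : Subgroup Γ, Υ.FiniteIndex ∧
      ∃ S : Subgroup Gt, S.map π = Υ ∧ Function.Injective (fun s : S => π (s : Gt)) :=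
  stmt2_general Gt Γ n hn π hsurj iso hRF
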